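/- arXiv:2409.20543 — 4 statements merged into one kernel-verified Lean document; each statement's English description precedes it below -/
import Mathlib

section
/- Let p be a prime, n ≥ 1, and R a commutative ring in which p^n = 0. Then in the ring of p-typical Witt vectors W(R), one has V(p^{n-1} · 1) = p^n · 1, where V is the Verschiebung. -/
/-!
In `𝕎 ℤ` the element `x = p ^ n - V (p ^ (n - 1))` has ghost components `p ^ n, 0, 0, …`, so its
`k`-th ghost component is divisible by `p ^ (n + k)`. Reading the ghost equations
`w_k = ∑_{i ≤ k} p ^ i x_i ^ (p ^ (k - i))` inductively, this forces every Witt coefficient of `x`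
to be divisible by `p ^ n`. Hence `x` maps to `0` in `𝕎 R` whenever `p ^ n = 0` in `R`.
-/

open Finset

lemma Nat.add_le_mul_pow {p n j : ℕ} (hp : 1 < p) (hn : 1 ≤ n) : n + j ≤ n * p ^ j := by
  have hj : j < p ^ j := Nat.lt_pow_self hp
  nlinarith

namespace WittVector

variable {p : ℕ} [hp : Fact p.Prime]

lemma ghostComponent_natCast_pow_sub_verschiebung {n : ℕ} (hn : 1 ≤ n) (k : ℕ) :
    ghostComponent k (((p ^ n : ℕ) : WittVector p ℤ) -
      verschiebung ((p ^ (n - 1) : ℕ) : WittVector p ℤ)) =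
      if k = 0 then (p : ℤ) ^ n else 0 := by
  cases k with
  | zero => simp [ghostComponent_zero_verschiebung]
  | succ k =>
    rw [map_sub, ghostComponent_verschiebung, map_natCast, map_natCast, if_neg k.succ_ne_zero,
      ← Nat.cast_mul, ← pow_succ', Nat.sub_add_cancel hn, sub_self]

lemma pow_add_dvd_pow_mul_pow_pow {c : ℤ} {n i k : ℕ} (hn : 1 ≤ n) (hik : i < k)
    (hc : (p : ℤ) ^ n ∣ c) : (p : ℤ) ^ (n + k) ∣ (p : ℤ) ^ i * c ^ p ^ (k - i) := by
  obtain ⟨m, rfl⟩ := hc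
  have hle : n + k ≤ i + n * p ^ (k - i) := by
    have := Nat.add_le_mul_pow (j := k - i) hp.out.one_lt hn
    omega
  calc (p : ℤ) ^ (n + k) ∣ (p : ℤ) ^ (i + n * p ^ (k - i)) := pow_dvd_pow _ hle
    _ ∣ (p : ℤ) ^ i * ((p : ℤ) ^ n * m) ^ p ^ (k - i) := by
      rw [pow_add, mul_pow, ← pow_mul]
      exact mul_dvd_mul_left _ (dvd_mul_right _ _)

lemma pow_dvd_coeff_of_pow_add_dvd_ghostComponent {x : WittVector p ℤ} {n : ℕ}
    (hx : ∀ k, (p : ℤ) ^ (n + k) ∣ ghostComponent k x) (k : ℕ) : (p : ℤ) ^ n ∣ x.coeff k := by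
  rcases Nat.eq_zero_or_pos n with rfl | hn
  · simp
  induction k using Nat.strong_induction_on with
  | _ k ih =>
    have hghost : ghostComponent k x =
        (∑ i ∈ range k, (p : ℤ) ^ i * x.coeff i ^ p ^ (k - i)) + (p : ℤ) ^ k * x.coeff k := by
      rw [ghostComponent_apply, aeval_wittPolynomial, sum_range_succ, Nat.sub_self, pow_zero,
        pow_one]
    have hlower : (p : ℤ) ^ (n + k) ∣ ∑ i ∈ range k, (p : ℤ) ^ i * x.coeff i ^ p ^ (k - i) :=
      dvd_sum fun i hi ↦
        pow_add_dvd_pow_mul_pow_pow hn (mem_range.mp hi) (ih i (mem_range.mp hi))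
    have hlast : (p : ℤ) ^ k * (p : ℤ) ^ n ∣ (p : ℤ) ^ k * x.coeff k := by
      rw [← pow_add, add_comm k]
      exact (dvd_add_right hlower).mp (hghost ▸ hx k)
    exact (mul_dvd_mul_iff_left (pow_ne_zero k (by exact_mod_cast hp.out.ne_zero))).mp hlast

end WittVector

theorem verschiebung_pow_of_pow_eq_zero (p : ℕ) [hp : Fact p.Prime] (R : Type*) [CommRing R]
    (n : ℕ) (hn : 1 ≤ n) (h : (p ^ n : R) = 0) :
    WittVector.verschiebung ((p ^ (n - 1) : ℕ) : WittVector p R) =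
      ((p ^ n : ℕ) : WittVector p R) := by
  set x : WittVector p ℤ := (p ^ n : ℕ) -
    WittVector.verschiebung ((p ^ (n - 1) : ℕ) : WittVector p ℤ)
  have hghost : ∀ k, (p : ℤ) ^ (n + k) ∣ WittVector.ghostComponent k x := by
    intro k
    rw [WittVector.ghostComponent_natCast_pow_sub_verschiebung hn]
    split_ifs with hk
    · simp [hk]
    · exact dvd_zero _
  have hx : WittVector.map (Int.castRingHom R) x = 0 := by
    ext k
    obtain ⟨m, hm⟩ := WittVector.pow_dvd_coeff_of_pow_add_dvd_ghostComponent hghost k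
    simp [WittVector.map_coeff, hm, h]
  rw [map_sub, map_natCast, WittVector.map_verschiebung, map_natCast, sub_eq_zero] at hx
  exact hx.symm
end

section
/- Let k be a field and let M be an ℕ-graded module over the polynomial ring k[x], where x has degree 1, such that each graded piece M_n is a finite-dimensional k-vector space. If multiplication by x is injective on M (i.e. M is torsion-free), then M is a free k[x]-module. -/
/-!
Choose, in every degree `n`, a basis of a complement of `X • M_{n-1}` in `M_n`, and let `b` be
the union of these bases. By induction on `n`, the elements `X ^ j • b i` of total degree `n` form
a `k`-basis of `M_n`: `M_n` is that complement plus `X • M_{n-1}`, and multiplication by `X` maps a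
basis of `M_{n-1}` to a basis of `X • M_{n-1}` because it is injective. As `M` is the direct sum
of the `M_n`, all `X ^ j • b i` form a `k`-basis of `M`, which says exactly that `b` is a
`k[X]`-basis of `M`.
-/

open Polynomial Submodule Set Function

theorem LinearIndependent.of_linearIndependent_basis_smul {R S M ι ι' : Type*} [Semiring R]
    [Semiring S] [Module R S] [AddCommMonoid M] [Module S M] [Module R M] [IsScalarTower R S M]
    (w : Module.Basis ι' R S) {v : ι → M}
    (h : LinearIndependent R fun p : ι × ι' => w p.2 • v p.1) : LinearIndependent S v := by
  rw [LinearIndependent, Finsupp.linearCombination_smul, LinearMap.coe_comp] at h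
  refine h.of_comp_right ?_
  rw [LinearMap.coe_comp, LinearEquiv.coe_coe]
  refine (Finsupp.mapRange_surjective _ (map_zero _) ?_).comp (LinearEquiv.surjective _)
  rw [← w.coe_repr_symm]
  exact w.repr.symm.surjective

theorem iSupIndep.linearIndependent_of_linearIndepOn_fibers {R M ι η : Type*} [Ring R]
    [AddCommGroup M] [Module R M] {A : η → Submodule R M} (hA : iSupIndep A) {v : ι → M}
    (d : ι → η) (hv : ∀ i, v i ∈ A (d i)) (hli : ∀ j, LinearIndepOn R v (d ⁻¹' {j})) :
    LinearIndependent R v := by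
  have hspan (j : η) : span R (range fun i : d ⁻¹' {j} => v i) ≤ A j :=
    span_le.2 <| range_subset_iff.2 fun ⟨i, hi⟩ => mem_singleton_iff.1 hi ▸ hv i
  refine (linearIndependent_equiv (Equiv.sigmaFiberEquiv d)).1 <|
    linearIndependent_iUnion_finite hli fun j t _ hj => (hA j).mono (hspan j) ?_
  exact iSup₂_le fun j' hj' =>
    (hspan j').trans <| le_iSup₂_of_le j' (ne_of_mem_of_not_mem hj' hj) le_rfl

section SetOfAddEq

variable {ι : Type*} (d : ι → ℕ)

theorem setOf_add_eq_zero : {p : ι × ℕ | d p.1 + p.2 = 0} = (·, 0) '' (d ⁻¹' {0}) := by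
  ext ⟨i, j⟩
  simp [and_comm, eq_comm]

theorem setOf_add_eq_succ (n : ℕ) : {p : ι × ℕ | d p.1 + p.2 = n + 1} =
    (·, 0) '' (d ⁻¹' {n + 1}) ∪ (fun p : ι × ℕ => (p.1, p.2 + 1)) '' {p | d p.1 + p.2 = n} := by
  ext ⟨i, _ | j⟩ <;> simp [← add_assoc]

end SetOfAddEq

section GradedModule

variable {k M ι : Type*} [Field k] [AddCommGroup M] [Module k[X] M]

variable (k) in
noncomputable def xPowSMul (b : ι → M) (p : ι × ℕ) : M := (X ^ p.2 : k[X]) • b p.1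

theorem xPowSMul_comp_zero (b : ι → M) : xPowSMul k b ∘ (·, 0) = b := by
  funext i
  simp [xPowSMul]

variable [Module k M] [IsScalarTower k k[X] M] (ℳ : ℕ → Submodule k M)

theorem xPowSMul_comp_succ (b : ι → M) :
    xPowSMul k b ∘ (fun p => (p.1, p.2 + 1)) =
      DistribSMul.toLinearMap k M (X : k[X]) ∘ xPowSMul k b := by
  funext p
  simp [xPowSMul, pow_succ', mul_smul]

noncomputable def xImage : ℕ → Submodule k M
  | 0 => ⊥
  | n + 1 => (ℳ n).map (DistribSMul.toLinearMap k M (X : k[X]))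

theorem xImage_le (hgr : ∀ n, ∀ m ∈ ℳ n, (X : k[X]) • m ∈ ℳ (n + 1)) (n : ℕ) :
    xImage ℳ n ≤ ℳ n := by
  cases n with
  | zero => exact bot_le
  | succ n => exact map_le_iff_le_comap.2 fun m hm => hgr n m hm

/-- `b`, with degrees `d`, lifts a homogeneous `k`-basis of `M ⧸ X • M`. -/
structure IsGradedComplementBasis (b : ι → M) (d : ι → ℕ) : Prop where
  sup_eq (n : ℕ) : xImage ℳ n ⊔ span k (b '' (d ⁻¹' {n})) = ℳ n
  disjoint (n : ℕ) : Disjoint (xImage ℳ n) (span k (b '' (d ⁻¹' {n})))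
  linearIndepOn (n : ℕ) : LinearIndepOn k b (d ⁻¹' {n})

namespace IsGradedComplementBasis

variable {ℳ} {b : ι → M} {d : ι → ℕ}

theorem span_image_xPowSMul (hb : IsGradedComplementBasis ℳ b d) (n : ℕ) :
    span k (xPowSMul k b '' {p | d p.1 + p.2 = n}) = ℳ n := by
  induction n with
  | zero =>
    rw [setOf_add_eq_zero, ← image_comp, xPowSMul_comp_zero, ← hb.sup_eq 0, xImage, bot_sup_eq]
  | succ n ih =>
    rw [setOf_add_eq_succ, image_union, span_union, ← image_comp, xPowSMul_comp_zero,
      ← image_comp, xPowSMul_comp_succ, image_comp, span_image, ih, ← hb.sup_eq (n + 1),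
      sup_comm]
    rfl

theorem linearIndepOn_xPowSMul (hb : IsGradedComplementBasis ℳ b d)
    (hinj : Injective fun m : M => (X : k[X]) • m) (n : ℕ) :
    LinearIndepOn k (xPowSMul k b) {p | d p.1 + p.2 = n} := by
  have hdeg (n : ℕ) : LinearIndepOn k (xPowSMul k b) ((·, 0) '' (d ⁻¹' {n})) :=
    .image_of_comp _ _ (by rw [xPowSMul_comp_zero]; exact hb.linearIndepOn n)
  induction n with
  | zero => rw [setOf_add_eq_zero]; exact hdeg 0
  | succ n ih =>
    rw [setOf_add_eq_succ]
    refine (hdeg _).union (.image_of_comp _ _ ?_) ?_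
    · rw [xPowSMul_comp_succ]
      exact ih.map_injOn _ hinj.injOn
    · rw [← image_comp, xPowSMul_comp_zero, ← image_comp, xPowSMul_comp_succ, image_comp,
        span_image, hb.span_image_xPowSMul]
      exact (hb.disjoint (n + 1)).symm

theorem linearIndependent_xPowSMul [DirectSum.Decomposition ℳ]
    (hb : IsGradedComplementBasis ℳ b d) (hinj : Injective fun m : M => (X : k[X]) • m) :
    LinearIndependent k (xPowSMul k b) :=
  (DirectSum.Decomposition.isInternal ℳ).submodule_iSupIndep
    |>.linearIndependent_of_linearIndepOn_fibers (fun p => d p.1 + p.2)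
      (fun _ => hb.span_image_xPowSMul _ ▸ subset_span (mem_image_of_mem _ rfl))
      (hb.linearIndepOn_xPowSMul hinj)

theorem linearIndependent [DirectSum.Decomposition ℳ] (hb : IsGradedComplementBasis ℳ b d)
    (hinj : Injective fun m : M => (X : k[X]) • m) : LinearIndependent k[X] b :=
  .of_linearIndependent_basis_smul (basisMonomials k) <| by
    convert hb.linearIndependent_xPowSMul hinj
    simp [xPowSMul, X_pow_eq_monomial]

theorem span_eq_top [DirectSum.Decomposition ℳ] (hb : IsGradedComplementBasis ℳ b d) :
    span k[X] (range b) = ⊤ := by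
  have hle (n : ℕ) : ℳ n ≤ (span k[X] (range b)).restrictScalars k := by
    rw [← hb.span_image_xPowSMul n, span_le]
    rintro _ ⟨p, -, rfl⟩
    exact smul_mem _ _ (subset_span (mem_range_self _))
  rw [← restrictScalars_eq_top_iff k, eq_top_iff,
    ← (DirectSum.Decomposition.isInternal ℳ).submodule_iSup_eq_top]
  exact iSup_le hle

end IsGradedComplementBasis

theorem isGradedComplementBasis_sigma {s : ℕ → Set M}
    (hsup : ∀ n, xImage ℳ n ⊔ span k (s n) = ℳ n)
    (hdisj : ∀ n, Disjoint (xImage ℳ n) (span k (s n)))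
    (hli : ∀ n, LinearIndependent k ((↑) : s n → M)) :
    IsGradedComplementBasis ℳ (fun i : Σ n, s n => (i.2 : M)) Sigma.fst := by
  have himage (n : ℕ) : (fun i : Σ n, s n => (i.2 : M)) '' (Sigma.fst ⁻¹' {n}) = s n := by
    rw [← range_sigmaMk, ← range_comp]
    exact Subtype.range_coe
  refine ⟨fun n => himage n ▸ hsup n, fun n => himage n ▸ hdisj n, fun n => ?_⟩
  rw [← range_sigmaMk, linearIndepOn_range_iff sigma_mk_injective]
  exact hli n

end GradedModule

theorem free_of_graded_torsionFree_general (k : Type*) [Field k] (M : Type*) [AddCommGroup M]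
    [Module (Polynomial k) M] [Module k M] [IsScalarTower k (Polynomial k) M]
    (ℳ : ℕ → Submodule k M) [DirectSum.Decomposition ℳ]
    (hgr : ∀ (n : ℕ), ∀ m ∈ ℳ n, (Polynomial.X : Polynomial k) • m ∈ ℳ (n + 1))
    (hinj : Function.Injective (fun m : M => (Polynomial.X : Polynomial k) • m)) :
    Module.Free (Polynomial k) M := by
  choose C hdisj hsup using
    fun n => IsModularLattice.exists_disjoint_and_sup_eq (xImage_le ℳ hgr n)
  choose s _ hspan hli using fun n => exists_linearIndependent k (C n : Set M)
  have hspanC (n : ℕ) : span k (s n) = C n := (hspan n).trans (span_eq _)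
  have hb := isGradedComplementBasis_sigma ℳ (fun n => hspanC n ▸ hsup n)
    (fun n => hspanC n ▸ hdisj n) hli
  exact .of_basis (.mk (hb.linearIndependent hinj) hb.span_eq_top.ge)

/-- An ℕ-graded `k[x]`-module with finite-dimensional graded pieces on which
multiplication by `x` is injective is free. -/
theorem free_of_graded_torsionFree (k : Type*) [Field k] (M : Type*) [AddCommGroup M]
    [Module (Polynomial k) M] [Module k M] [IsScalarTower k (Polynomial k) M]
    (ℳ : ℕ → Submodule k M) [DirectSum.Decomposition ℳ]
    (hgr : ∀ (n : ℕ), ∀ m ∈ ℳ n, (Polynomial.X : Polynomial k) • m ∈ ℳ (n + 1))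
    (hfd : ∀ n, FiniteDimensional k (ℳ n))
    (hinj : Function.Injective (fun m : M => (Polynomial.X : Polynomial k) • m)) :
    Module.Free (Polynomial k) M :=
  free_of_graded_torsionFree_general k M ℳ hgr hinj
end

section
/- Let k be a field and n ≥ 0. Let M be a finitely generated module over the polynomial ring k[x] whose x-power-torsion submodule {m ∈ M | ∃ j, x^j·m = 0} is annihilated by x^n. Then the rank of M over k[x] (the dimension over the field of fractions k(x) of M ⊗_{k[x]} k(x)) equals the k-dimension of the submodule x^n·(M/x^{n+1}M) of M/x^{n+1}M. -/
/-!
The map `m ↦ xⁿ • m` from `M` onto `xⁿ(M/xⁿ⁺¹M)` has kernel `xM + T`, with `T` the torsion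
submodule: if `x^j u` kills `t` with `x ∤ u`, then `u • t` is `x`-power torsion, so `xⁿ u • t = 0`,
and a Bézout relation `c x + d u = 1` puts `xⁿ • t` into `xⁿ⁺¹M`. Hence `xⁿ(M/xⁿ⁺¹M) ≅ F/xF` for
the free module `F = M/T`, i.e. `(k[x]/x)^r ≅ kʳ` with `r` the rank of `F`, which is that of `M`.
-/

open Polynomial Module Submodule

section SMulRange

variable {R M N : Type*} [CommRing R] [AddCommGroup M] [Module R M] [AddCommGroup N] [Module R N]

theorem map_range_smul_id_of_surjective {f : M →ₗ[R] N} (hf : Function.Surjective f) (a : R) :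
    (LinearMap.range (a • LinearMap.id : M →ₗ[R] M)).map f =
      LinearMap.range (a • LinearMap.id : N →ₗ[R] N) := by
  rw [← LinearMap.range_comp, show f ∘ₗ (a • LinearMap.id) = (a • LinearMap.id) ∘ₗ f by ext; simp,
    LinearMap.range_comp_of_range_eq_top _ (LinearMap.range_eq_top.mpr hf)]

theorem range_smul_id_pi {ι : Type*} {Ms : ι → Type*} [∀ i, AddCommGroup (Ms i)]
    [∀ i, Module R (Ms i)] (a : R) :
    LinearMap.range (a • LinearMap.id : (∀ i, Ms i) →ₗ[R] ∀ i, Ms i) =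
      pi Set.univ fun i ↦ LinearMap.range (a • LinearMap.id : Ms i →ₗ[R] Ms i) := by
  ext f
  simp only [LinearMap.mem_range, mem_pi, Set.mem_univ, forall_true_left]
  constructor
  · rintro ⟨g, rfl⟩ i
    exact ⟨g i, rfl⟩
  · intro h
    choose g hg using h
    exact ⟨g, funext hg⟩

theorem range_smul_id_eq_span_singleton (a : R) :
    LinearMap.range (a • LinearMap.id : R →ₗ[R] R) = Ideal.span {a} := by
  ext x
  simp [Ideal.mem_span_singleton', mul_comm]

noncomputable def Module.Basis.quotientRangeSMulEquiv {ι F : Type*} [Fintype ι] [DecidableEq ι]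
    [AddCommGroup F] [Module R F] (b : Basis ι R F) (a : R) :
    (F ⧸ LinearMap.range (a • LinearMap.id : F →ₗ[R] F)) ≃ₗ[R] (ι → R ⧸ Ideal.span {a}) :=
  Quotient.equiv _ _ b.equivFun (map_range_smul_id_of_surjective b.equivFun.surjective a) ≪≫ₗ
    quotEquivOfEq _ _ (by rw [range_smul_id_pi, range_smul_id_eq_span_singleton]) ≪≫ₗ
    quotientPi _

end SMulRange

section PrincipalIdealDomain

variable {R M : Type*} [CommRing R] [IsDomain R] [IsPrincipalIdealRing R]
  [AddCommGroup M] [Module R M] {p : R} {n : ℕ}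

theorem pow_smul_mem_range_pow_succ_smul_of_mem_torsion (hp : Irreducible p)
    (htors : ∀ m : M, (∃ j : ℕ, p ^ j • m = 0) → p ^ n • m = 0) {t : M} (ht : t ∈ torsion R M) :
    p ^ n • t ∈ LinearMap.range (p ^ (n + 1) • LinearMap.id : M →ₗ[R] M) := by
  obtain ⟨⟨a, ha⟩, hat⟩ := ht
  obtain ⟨j, u, hpu, rfl⟩ := WfDvdMonoid.max_power_factor (nonZeroDivisors.ne_zero ha) hp
  have hu : p ^ n • u • t = 0 := htors _ ⟨j, by rwa [smul_smul]⟩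
  obtain ⟨c, d, hcd⟩ := hp.coprime_iff_not_dvd.mpr hpu
  refine ⟨c • t, ?_⟩
  show p ^ (n + 1) • c • t = p ^ n • t
  linear_combination (norm := module) hcd • (p ^ n • t) - d • hu

theorem ker_pow_smul_comp_mkQ (hp : Irreducible p)
    (htors : ∀ m : M, (∃ j : ℕ, p ^ j • m = 0) → p ^ n • m = 0) :
    LinearMap.ker ((p ^ n • LinearMap.id) ∘ₗ
        (LinearMap.range (p ^ (n + 1) • LinearMap.id : M →ₗ[R] M)).mkQ) =
      LinearMap.range (p • LinearMap.id : M →ₗ[R] M) ⊔ torsion R M := by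
  refine le_antisymm (fun m hm ↦ ?_) (sup_le ?_ ?_)
  · obtain ⟨m', hm'⟩ : p ^ n • m ∈ LinearMap.range (p ^ (n + 1) • LinearMap.id : M →ₗ[R] M) := by
      simpa [← Quotient.mk_smul, Quotient.mk_eq_zero] using hm
    have hpn : p ^ n ∈ nonZeroDivisors R := pow_mem (mem_nonZeroDivisors_of_ne_zero hp.ne_zero) n
    have htor : m - p • m' ∈ torsion R M := ⟨⟨p ^ n, hpn⟩, by
      change p ^ n • (m - p • m') = 0
      change p ^ (n + 1) • m' = p ^ n • m at hm'
      linear_combination (norm := module) -hm'⟩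
    have hpm : p • m' ∈ LinearMap.range (p • LinearMap.id : M →ₗ[R] M) := ⟨m', rfl⟩
    simpa using add_mem_sup hpm htor
  · rintro _ ⟨m', rfl⟩
    simp only [LinearMap.mem_ker, LinearMap.comp_apply, mkQ_apply, LinearMap.smul_apply,
      LinearMap.id_apply, ← Quotient.mk_smul, Quotient.mk_eq_zero]
    exact ⟨m', by simp [pow_succ, mul_smul]⟩
  · intro t ht
    simpa [← Quotient.mk_smul, Quotient.mk_eq_zero] using
      pow_smul_mem_range_pow_succ_smul_of_mem_torsion hp htors ht

noncomputable def rangePowSMulQuotientEquiv (hp : Irreducible p)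
    (htors : ∀ m : M, (∃ j : ℕ, p ^ j • m = 0) → p ^ n • m = 0) :
    LinearMap.range (p ^ n • LinearMap.id :
        (M ⧸ LinearMap.range (p ^ (n + 1) • LinearMap.id : M →ₗ[R] M)) →ₗ[R] _) ≃ₗ[R]
      (M ⧸ torsion R M) ⧸ LinearMap.range (p • LinearMap.id : (M ⧸ torsion R M) →ₗ[R] _) :=
  LinearEquiv.ofEq _ _ (LinearMap.range_comp_of_range_eq_top _ (range_mkQ _)).symm ≪≫ₗ
    (LinearMap.quotKerEquivRange _).symm ≪≫ₗ
    quotEquivOfEq _ _ ((ker_pow_smul_comp_mkQ hp htors).trans (sup_comm _ _)) ≪≫ₗ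
    (quotientQuotientEquivQuotientSup _ _).symm ≪≫ₗ
    quotEquivOfEq _ _ (map_range_smul_id_of_surjective (mkQ_surjective _) p)

end PrincipalIdealDomain

theorem finrank_restrictScalars_eq_of_linearEquiv {k R V W : Type*} [CommSemiring k] [Semiring R]
    [Algebra k R] [AddCommMonoid V] [Module R V] [AddCommMonoid W] [Module R W] [Module k W]
    [IsScalarTower k R W] (e : V ≃ₗ[R] W) :
    finrank k (RestrictScalars k R V) = finrank k W :=
  LinearEquiv.finrank_eq
    { (RestrictScalars.addEquiv k R V).trans e.toAddEquiv with
      map_smul' := fun c x ↦ by simp [RestrictScalars.addEquiv_map_smul] }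

theorem finrank_pi_quotient_span_X (k ι : Type*) [Field k] [Fintype ι] :
    finrank k (ι → k[X] ⧸ Ideal.span {(X : k[X])}) = Fintype.card ι := by
  have hX : finrank k (k[X] ⧸ Ideal.span {(X : k[X])}) = 1 := by
    simp [finrank_quotient_span_eq_natDegree]
  have := finite_of_finrank_eq_succ hX
  simp [finrank_pi_fintype, hX]

/-- For a finitely generated `k[x]`-module `M` whose `x`-power torsion is killed by `xⁿ`,
the rank of `M` (the dimension of `M ⊗ k(x)` over `k(x)`) equals the `k`-dimension of
`xⁿ·(M/xⁿ⁺¹M)`. -/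
theorem rank_eq_finrank_pow_smul_quotient (k : Type) [Field k] (n : ℕ)
    (M : Type) [AddCommGroup M] [Module (Polynomial k) M] [Module.Finite (Polynomial k) M]
    (htors : ∀ m : M, (∃ j : ℕ, (X : Polynomial k) ^ j • m = 0) →
      (X : Polynomial k) ^ n • m = 0) :
    Module.finrank (FractionRing (Polynomial k))
        (TensorProduct (Polynomial k) (FractionRing (Polynomial k)) M) =
      Module.finrank k (RestrictScalars k (Polynomial k)
        ↥(LinearMap.range ((X : Polynomial k) ^ n •
          (LinearMap.id : (M ⧸ LinearMap.range ((X : Polynomial k) ^ (n + 1) •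
              (LinearMap.id : M →ₗ[Polynomial k] M)))
            →ₗ[Polynomial k] (M ⧸ LinearMap.range ((X : Polynomial k) ^ (n + 1) •
              (LinearMap.id : M →ₗ[Polynomial k] M))))))) := by
  classical
  let F := M ⧸ torsion k[X] M
  let e := rangePowSMulQuotientEquiv irreducible_X htors ≪≫ₗ
    (Free.chooseBasis k[X] F).quotientRangeSMulEquiv X
  calc finrank (FractionRing k[X]) (TensorProduct k[X] (FractionRing k[X]) M)
      = finrank k[X] M := (TensorProduct.isBaseChange k[X] M (FractionRing k[X])).finrank_eq
    _ = finrank k[X] F := (finrank_quotient_eq_of_le_torsion le_rfl).symm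
    _ = Fintype.card (Free.ChooseBasisIndex k[X] F) := finrank_eq_card_chooseBasisIndex k[X] F
    _ = finrank k (Free.ChooseBasisIndex k[X] F → k[X] ⧸ Ideal.span {(X : k[X])}) :=
      (finrank_pi_quotient_span_X k _).symm
    _ = _ := (finrank_restrictScalars_eq_of_linearEquiv e).symm
end

section
/- Let C be a chain complex of abelian groups equipped with a decreasing filtration by subcomplexes C = F⁰ ⊇ F¹ ⊇ F² ⊇ ⋯ such that in each degree n there exists K with (F^k)_n = 0 for all k ≥ K. Suppose that for each k ≥ 0, the quotient complex F^k/F^{k+1} satisfies H_j(F^k/F^{k+1}) = 0 for all j < 2k. Then for every k, H_j(F^k) = 0 for all j < 2k. -/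
/-!
A cycle `x ∈ F^k` of degree `j - 1 < 2k` is killed by successive approximation: if
`x - d w ∈ F^i` with `i ≥ k`, the vanishing of `H_{j-1}(F^i/F^{i+1})` yields `y ∈ F^i ⊆ F^k`
with `x - d (w + y) ∈ F^{i+1}`. Completeness puts the remainder in `F^K = 0` after finitely
many steps, so `x` is a boundary in `F^k`.
-/

section

variable {A : ℤ → Type*} [∀ n, AddCommGroup (A n)] {d : ∀ n : ℤ, A n →+ A (n - 1)}
  {F : ℕ → ∀ n : ℤ, AddSubgroup (A n)}

theorem exists_sub_boundary_mem_filtration (hdd : ∀ (n : ℤ) (x : A n), d (n - 1) (d n x) = 0)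
    (hFmono : ∀ k n, F (k + 1) n ≤ F k n) {k : ℕ} {j : ℤ}
    (hlift : ∀ i ≥ k, ∀ z ∈ F i (j - 1), d (j - 1) z ∈ F (i + 1) (j - 1 - 1) →
      ∃ y ∈ F i j, z - d j y ∈ F (i + 1) (j - 1))
    {x : A (j - 1)} (hx : x ∈ F k (j - 1)) (hdx : d (j - 1) x = 0) (m : ℕ) :
    ∃ w ∈ F k j, x - d j w ∈ F (k + m) (j - 1) := by
  induction m with
  | zero => exact ⟨0, zero_mem _, by simpa using hx⟩
  | succ m ih =>
    obtain ⟨w, hw, hxw⟩ := ih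
    have hcycle : d (j - 1) (x - d j w) = 0 := by rw [map_sub, hdx, hdd, sub_zero]
    obtain ⟨y, hy, hxwy⟩ := hlift (k + m) (Nat.le_add_right k m) _ hxw
      (by rw [hcycle]; exact zero_mem _)
    have hFanti : Antitone (F · j) := antitone_nat_of_succ_le (hFmono · j)
    refine ⟨w + y, add_mem hw (hFanti (Nat.le_add_right k m) hy), ?_⟩
    rwa [map_add, ← sub_sub]

end

theorem connectivity_of_filtration_general (A : ℤ → Type*) [∀ n, AddCommGroup (A n)]
    (d : ∀ n : ℤ, A n →+ A (n - 1))
    (hdd : ∀ (n : ℤ) (x : A n), d (n - 1) (d n x) = 0)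
    (F : ∀ (_ : ℕ) (n : ℤ), AddSubgroup (A n))
    (hFmono : ∀ k n, F (k + 1) n ≤ F k n)
    (hFbdd : ∀ n : ℤ, ∃ K : ℕ, ∀ k ≥ K, F k n = ⊥)
    -- vanishing of `H_{j-1}(F^k/F^{k+1})` for `j - 1 < 2k`
    (hgr : ∀ (k : ℕ) (j : ℤ), j - 1 < 2 * (k : ℤ) →
      ∀ x : A (j - 1), x ∈ F k (j - 1) → d (j - 1) x ∈ F (k + 1) (j - 1 - 1) →
        ∃ y ∈ F k j, x - d j y ∈ F (k + 1) (j - 1)) :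
    -- vanishing of `H_{j-1}(F^k)` for `j - 1 < 2k`
    ∀ (k : ℕ) (j : ℤ), j - 1 < 2 * (k : ℤ) →
      ∀ x : A (j - 1), x ∈ F k (j - 1) → d (j - 1) x = 0 →
        ∃ y ∈ F k j, x = d j y := by
  intro k j hj x hx hdx
  obtain ⟨K, hK⟩ := hFbdd (j - 1)
  obtain ⟨w, hw, hxw⟩ := exists_sub_boundary_mem_filtration hdd hFmono
    (fun i hi => hgr i j (by omega)) hx hdx K
  rw [hK (k + K) (Nat.le_add_left K k), AddSubgroup.mem_bot, sub_eq_zero] at hxw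
  exact ⟨w, hw, hxw⟩

/-- A complete decreasing filtration of a chain complex of abelian groups whose
associated graded pieces `F^k/F^{k+1}` have vanishing homology in degrees `< 2k`
has each stage `F^k` with vanishing homology in degrees `< 2k`. -/
theorem connectivity_of_filtration (A : ℤ → Type*) [∀ n, AddCommGroup (A n)]
    (d : ∀ n : ℤ, A n →+ A (n - 1))
    (hdd : ∀ (n : ℤ) (x : A n), d (n - 1) (d n x) = 0)
    (F : ∀ (_ : ℕ) (n : ℤ), AddSubgroup (A n))
    (hF0 : ∀ n, F 0 n = ⊤)
    (hFmono : ∀ k n, F (k + 1) n ≤ F k n)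
    (hFbdd : ∀ n : ℤ, ∃ K : ℕ, ∀ k ≥ K, F k n = ⊥)
    (hFd : ∀ (k : ℕ) (n : ℤ) (x : A n), x ∈ F k n → d n x ∈ F k (n - 1))
    -- vanishing of `H_{j-1}(F^k/F^{k+1})` for `j - 1 < 2k`
    (hgr : ∀ (k : ℕ) (j : ℤ), j - 1 < 2 * (k : ℤ) →
      ∀ x : A (j - 1), x ∈ F k (j - 1) → d (j - 1) x ∈ F (k + 1) (j - 1 - 1) →
        ∃ y ∈ F k j, x - d j y ∈ F (k + 1) (j - 1)) :
    -- vanishing of `H_{j-1}(F^k)` for `j - 1 < 2k`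
    ∀ (k : ℕ) (j : ℤ), j - 1 < 2 * (k : ℤ) →
      ∀ x : A (j - 1), x ∈ F k (j - 1) → d (j - 1) x = 0 →
        ∃ y ∈ F k j, x = d j y :=
  connectivity_of_filtration_general A d hdd F hFmono hFbdd hgr
end
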